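/- (The bilinear-interpolation symbol satisfies the V-cycle mirror-point condition with constant zero.) Let α, β ∈ (1,2), d, e, ρ > 0, and let p(θ₁,θ₂) = (1+cos θ₁)(1+cos θ₂). Then for each of the three mirror-point maps y(θ₁,θ₂) ∈ {(θ₁, π−θ₂), (π−θ₁, θ₂), (π−θ₁, π−θ₂)}, one has lim_{(θ₁,θ₂)→(0,0)} p(y(θ₁,θ₂))/𝓕_{(α,β)}(θ₁,θ₂) = 0 (where the limit is taken over (θ₁,θ₂) ≠ (0,0)); in particular also lim_{(θ₁,θ₂)→(0,0)} p(y(θ₁,θ₂))²/𝓕_{(α,β)}(θ₁,θ₂) = 0, i.e. both the two-grid condition and the stronger V-cycle condition hold with c = 0. -/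

import Mathlib

/-!
Each mirror numerator, and its square, is bounded by `C θⱼ²` for a reflected coordinate `θⱼ`,
while `𝓕(θ)` dominates positive multiples of `q_α(θ₁)` and of `q_β(θ₂)`. So it suffices that
`q_γ(ξ) / ξ² → ∞` as `ξ → 0`.

For this write `q_γ(ξ) = 2 ∑ w_k (1 - cos((k-1)ξ)) - 2 ∑ w_k`. The partial sums of `g_k` are the
coefficients `g_n^{(γ-1)} ≤ 0`, so `∑ w_k ≤ 0`; moreover `w_k > 0` for `k ≥ 3` and
`w_0 + w_2 ≥ 0`. With `1 - cos x ≥ 2x²/π²` for `|x| ≤ π` this gives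
`q_γ(ξ)/ξ² ≥ (4/π²) ∑_{m<N} w_{m+3} (m+2)²` whenever `(N+1)|ξ| ≤ π`, and the right-hand side is
unbounded in `N`: the ratio `g_{m+1}/g_m = (m-γ)/(m+1)` makes `g_m m³` eventually increasing,
so `w_{m+3} (m+2)² ≥ (2-γ)/2 · g_{m+2} (m+2)²` dominates a multiple of the harmonic series.
-/

open scoped Real Topology
open Filter

/-- Alternating fractional binomial coefficients. -/
noncomputable def gcoef (γ : ℝ) (k : ℕ) : ℝ :=
  (-1 : ℝ) ^ k / (Nat.factorial k) * ∏ i ∈ Finset.range k, (γ - i)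

/-- WSGD weights. -/
noncomputable def w (γ : ℝ) : ℕ → ℝ
  | 0 => γ / 2 * gcoef γ 0
  | (k + 1) => γ / 2 * gcoef γ (k + 1) + (2 - γ) / 2 * gcoef γ k

/-- The symbol `f_γ(ξ) = -∑_{k=-1}^∞ w_{k+1}^{(γ)} e^{ikξ}`. -/
noncomputable def fsym (γ : ℝ) (ξ : ℝ) : ℂ :=
  -∑' k : ℕ, (w γ k : ℂ) * Complex.exp (Complex.I * ((k : ℂ) - 1) * (ξ : ℂ))

/-- `q_γ(ξ) = f_γ(ξ) + f_γ(-ξ)` (real-valued). -/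
noncomputable def qsym (γ : ℝ) (ξ : ℝ) : ℂ := fsym γ ξ + fsym γ (-ξ)

/-- `𝓕_{(α,β)}(θ₁,θ₂) = d·q_α(θ₁) + e·ρ·q_β(θ₂)`. -/
noncomputable def Fsym (α β d e ρ : ℝ) (θ : ℝ × ℝ) : ℝ :=
  d * (qsym α θ.1).re + e * ρ * (qsym β θ.2).re

/-- The bilinear-interpolation symbol `p(θ₁,θ₂) = (1+cos θ₁)(1+cos θ₂)`. -/
noncomputable def pfun (θ : ℝ × ℝ) : ℝ :=
  (1 + Real.cos θ.1) * (1 + Real.cos θ.2)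

lemma gcoef_zero (γ : ℝ) : gcoef γ 0 = 1 := by simp [gcoef]

lemma gcoef_succ (γ : ℝ) (k : ℕ) : gcoef γ (k + 1) = gcoef γ k * (k - γ) / (k + 1) := by
  simp only [gcoef, Finset.prod_range_succ, Nat.factorial_succ]
  push_cast
  field_simp
  ring

lemma gcoef_succ_eq_mul_gcoef_sub_one (γ : ℝ) (k : ℕ) :
    gcoef γ (k + 1) = -γ / (k + 1) * gcoef (γ - 1) k := by
  simp only [gcoef, Finset.prod_range_succ', Nat.factorial_succ]
  push_cast
  simp only [sub_add_eq_sub_sub_swap]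
  field_simp
  ring

lemma sum_range_succ_gcoef (γ : ℝ) (n : ℕ) :
    ∑ k ∈ Finset.range (n + 1), gcoef γ k = gcoef (γ - 1) n := by
  induction n with
  | zero => simp [gcoef_zero]
  | succ n ih =>
    rw [Finset.sum_range_succ, ih, gcoef_succ_eq_mul_gcoef_sub_one, gcoef_succ]
    field_simp
    ring

lemma gcoef_pos_of_neg {μ : ℝ} (hμ : μ < 0) (k : ℕ) : 0 < gcoef μ k := by
  induction k with
  | zero => simp [gcoef_zero]
  | succ k ih =>
    rw [gcoef_succ]
    have : 0 < (k : ℝ) - μ := by linarith [k.cast_nonneg (α := ℝ)]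
    positivity

lemma gcoef_succ_neg {δ : ℝ} (h0 : 0 < δ) (h1 : δ < 1) (k : ℕ) : gcoef δ (k + 1) < 0 := by
  rw [gcoef_succ_eq_mul_gcoef_sub_one]
  exact mul_neg_of_neg_of_pos (by rw [neg_div]; exact neg_neg_of_pos (by positivity))
    (gcoef_pos_of_neg (by linarith) k)

lemma gcoef_add_two_pos {γ : ℝ} (h1 : 1 < γ) (h2 : γ < 2) (k : ℕ) : 0 < gcoef γ (k + 2) := by
  rw [gcoef_succ_eq_mul_gcoef_sub_one]
  exact mul_pos_of_neg_of_neg (by rw [neg_div]; exact neg_neg_of_pos (by positivity))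
    (gcoef_succ_neg (by linarith) (by linarith) k)

lemma summable_gcoef {γ : ℝ} (h1 : 1 < γ) (h2 : γ < 2) : Summable (gcoef γ) := by
  refine (summable_nat_add_iff 2).mp <|
    summable_of_sum_range_le (c := γ - 1) (fun k => (gcoef_add_two_pos h1 h2 k).le) fun n => ?_
  have h := sum_range_succ_gcoef γ (n + 1)
  rw [Finset.sum_range_succ', Finset.sum_range_succ', gcoef_zero] at h
  have hg1 : gcoef γ (0 + 1) = -γ := by norm_num [gcoef_succ_eq_mul_gcoef_sub_one, gcoef_zero]
  linarith [gcoef_succ_neg (by linarith : 0 < γ - 1) (by linarith) n]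

lemma w_succ (γ : ℝ) (k : ℕ) :
    w γ (k + 1) = γ / 2 * gcoef γ (k + 1) + (2 - γ) / 2 * gcoef γ k := rfl

lemma summable_w {γ : ℝ} (h1 : 1 < γ) (h2 : γ < 2) : Summable (w γ) := by
  have hg := summable_gcoef h1 h2
  exact (summable_nat_add_iff 1).mp
    ((((summable_nat_add_iff 1).mpr hg).mul_left (γ / 2)).add (hg.mul_left ((2 - γ) / 2)))

lemma sum_range_add_two_w (γ : ℝ) (n : ℕ) :
    ∑ k ∈ Finset.range (n + 2), w γ k =
      γ / 2 * gcoef (γ - 1) (n + 1) + (2 - γ) / 2 * gcoef (γ - 1) n := by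
  rw [← sum_range_succ_gcoef, ← sum_range_succ_gcoef, Finset.sum_range_succ',
    Finset.sum_range_succ' (gcoef γ)]
  simp only [w, Finset.sum_add_distrib, ← Finset.mul_sum]
  ring

lemma tsum_w_nonpos {γ : ℝ} (h1 : 1 < γ) (h2 : γ < 2) : ∑' k, w γ k ≤ 0 := by
  refine le_of_tendsto ((summable_w h1 h2).hasSum.tendsto_sum_nat) ?_
  filter_upwards [eventually_ge_atTop 3] with n hn
  obtain ⟨m, rfl⟩ : ∃ m, n = m + 1 + 2 := ⟨n - 3, by omega⟩
  rw [sum_range_add_two_w]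
  have := gcoef_succ_neg (by linarith : 0 < γ - 1) (by linarith) (m + 1)
  have := gcoef_succ_neg (by linarith : 0 < γ - 1) (by linarith) m
  nlinarith

lemma gcoef_le_w_add_three {γ : ℝ} (h1 : 1 < γ) (h2 : γ < 2) (k : ℕ) :
    (2 - γ) / 2 * gcoef γ (k + 2) ≤ w γ (k + 3) := by
  have := gcoef_add_two_pos h1 h2 (k + 1)
  rw [w_succ]
  nlinarith

lemma w_add_three_pos {γ : ℝ} (h1 : 1 < γ) (h2 : γ < 2) (k : ℕ) : 0 < w γ (k + 3) :=
  (mul_pos (by linarith) (gcoef_add_two_pos h1 h2 k)).trans_le (gcoef_le_w_add_three h1 h2 k)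

lemma w_zero_add_w_two_nonneg {γ : ℝ} (h1 : 1 ≤ γ) : 0 ≤ w γ 0 + w γ 2 := by
  have hw : w γ 0 + w γ 2 = γ * (γ + 2) * (γ - 1) / 4 := by
    norm_num [w, gcoef_succ, gcoef_zero]
    ring
  rw [hw]
  have : 0 ≤ γ - 1 := by linarith
  positivity

lemma fsym_term_eq (γ ξ : ℝ) (k : ℕ) :
    (w γ k : ℂ) * Complex.exp (Complex.I * ((k : ℂ) - 1) * (ξ : ℂ)) =
      w γ k * Complex.exp (((k - 1) * ξ : ℝ) * Complex.I) := by
  push_cast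
  ring_nf

lemma fsym_re {γ : ℝ} (hw : Summable (w γ)) (ξ : ℝ) :
    (fsym γ ξ).re = -∑' k : ℕ, w γ k * Real.cos ((k - 1) * ξ) := by
  have hs : Summable fun k : ℕ => (w γ k : ℂ) * Complex.exp (((k - 1) * ξ : ℝ) * Complex.I) := by
    refine Summable.of_norm ((summable_abs_iff.mpr hw).congr fun k => ?_)
    rw [norm_mul, Complex.norm_exp_ofReal_mul_I, mul_one, Complex.norm_real, Real.norm_eq_abs]
  simp only [fsym, fsym_term_eq, Complex.neg_re, Complex.re_tsum hs, Complex.re_ofReal_mul,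
    Complex.exp_ofReal_mul_I_re]

lemma qsym_re {γ : ℝ} (hw : Summable (w γ)) (ξ : ℝ) :
    (qsym γ ξ).re = -2 * ∑' k : ℕ, w γ k * Real.cos ((k - 1) * ξ) := by
  simp only [qsym, Complex.add_re, fsym_re hw, mul_neg, Real.cos_neg]
  ring

lemma sum_le_qsym_re {γ : ℝ} (h1 : 1 < γ) (h2 : γ < 2) (ξ : ℝ) (n : ℕ) :
    2 * ∑ m ∈ Finset.range n, w γ (m + 3) * (1 - Real.cos ((m + 2) * ξ)) ≤ (qsym γ ξ).re := by
  set u : ℕ → ℝ := fun k => w γ k * (1 - Real.cos ((k - 1) * ξ)) with hu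
  have hw := summable_w h1 h2
  have hwcos : Summable fun k : ℕ => w γ k * Real.cos ((k - 1) * ξ) :=
    Summable.of_norm_bounded (summable_abs_iff.mpr hw) fun k => by
      rw [norm_mul, Real.norm_eq_abs, Real.norm_eq_abs]
      exact mul_le_of_le_one_right (abs_nonneg _) (Real.abs_cos_le_one _)
  have hu_summable : Summable u := by
    simpa only [hu, mul_sub, mul_one] using hw.sub hwcos
  have hu_tail (m : ℕ) : u (m + 3) = w γ (m + 3) * (1 - Real.cos ((m + 2) * ξ)) := by
    simp only [hu]
    push_cast
    ring_nf
  have hhead : 0 ≤ ∑ k ∈ Finset.range 3, u k := by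
    have : ∑ k ∈ Finset.range 3, u k = (w γ 0 + w γ 2) * (1 - Real.cos ξ) := by
      norm_num [hu, Finset.sum_range_succ]
      ring
    rw [this]
    exact mul_nonneg (w_zero_add_w_two_nonneg h1.le) (by linarith [Real.cos_le_one ξ])
  have htail : ∑ m ∈ Finset.range n, u (m + 3) ≤ ∑' m, u (m + 3) :=
    ((summable_nat_add_iff 3).mpr hu_summable).sum_le_tsum _ fun m _ => by
      rw [hu_tail]
      exact mul_nonneg (w_add_three_pos h1 h2 m).le (by linarith [Real.cos_le_one ((m + 2) * ξ)])
  calc 2 * ∑ m ∈ Finset.range n, w γ (m + 3) * (1 - Real.cos ((m + 2) * ξ))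
      = 2 * ∑ m ∈ Finset.range n, u (m + 3) := by simp only [hu_tail]
    _ ≤ 2 * ∑' k, u k := by rw [← hu_summable.sum_add_tsum_nat_add 3]; linarith
    _ ≤ 2 * ∑' k, u k - 2 * ∑' k, w γ k := by linarith [tsum_w_nonpos h1 h2]
    _ = (qsym γ ξ).re := by
      have hsplit : ∑' k, u k = ∑' k, w γ k - ∑' k, w γ k * Real.cos ((k - 1) * ξ) := by
        rw [← hw.tsum_sub hwcos]
        simp only [hu, mul_sub, mul_one]
      rw [qsym_re hw, hsplit]
      ring

lemma qsym_re_nonneg {γ : ℝ} (h1 : 1 < γ) (h2 : γ < 2) (ξ : ℝ) : 0 ≤ (qsym γ ξ).re := by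
  simpa using sum_le_qsym_re h1 h2 ξ 0

lemma gcoef_pos_of_two_le {γ : ℝ} (h1 : 1 < γ) (h2 : γ < 2) {k : ℕ} (hk : 2 ≤ k) :
    0 < gcoef γ k := by
  obtain ⟨j, rfl⟩ := Nat.exists_eq_add_of_le' hk
  exact gcoef_add_two_pos h1 h2 j

lemma two_lt_of_five_le_mul {γ : ℝ} (h1 : 1 < γ) {m : ℕ} (hm : 5 ≤ (2 - γ) * m) : 2 < m := by
  have : (2 : ℝ) < m := by nlinarith [mul_nonneg (sub_nonneg.mpr h1.le) (m.cast_nonneg (α := ℝ))]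
  exact_mod_cast this

lemma gcoef_mul_cube_le_succ {γ : ℝ} (h1 : 1 < γ) (h2 : γ < 2) {m : ℕ}
    (hm : 5 ≤ (2 - γ) * m) : gcoef γ m * m ^ 3 ≤ gcoef γ (m + 1) * (m + 1 : ℝ) ^ 3 := by
  have hm2 := two_lt_of_five_le_mul h1 hm
  have hg := gcoef_pos_of_two_le h1 h2 hm2.le
  have hgrowth : (m : ℝ) ^ 3 * (m + 1) ≤ (m - γ) * (m + 1) ^ 3 := by
    have hm2' : (2 : ℝ) < m := by exact_mod_cast hm2
    have : (m : ℝ) ^ 3 ≤ (m - γ) * (m + 1) ^ 2 := by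
      nlinarith [mul_le_mul_of_nonneg_right hm (by linarith : (0 : ℝ) ≤ m)]
    nlinarith
  rw [gcoef_succ, div_mul_eq_mul_div, le_div_iff₀ (by positivity)]
  nlinarith [mul_le_mul_of_nonneg_left hgrowth hg.le]

lemma exists_pos_le_gcoef_mul_cube {γ : ℝ} (h1 : 1 < γ) (h2 : γ < 2) :
    ∃ c₀ > 0, ∃ K : ℕ, ∀ m, K ≤ m → c₀ ≤ gcoef γ m * (m : ℝ) ^ 3 := by
  obtain ⟨K, hK⟩ : ∃ K : ℕ, 5 / (2 - γ) ≤ K := exists_nat_ge _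
  rw [div_le_iff₀ (by linarith), mul_comm] at hK
  have hmono : Monotone fun j => gcoef γ (K + j) * ((K + j : ℕ) : ℝ) ^ 3 :=
    monotone_nat_of_le_succ fun j => by
      have := gcoef_mul_cube_le_succ h1 h2 (m := K + j) (by push_cast; nlinarith)
      simpa only [Nat.cast_add, Nat.cast_one, add_assoc] using this
  refine ⟨gcoef γ K * (K : ℝ) ^ 3, ?_, K, fun m hm => ?_⟩
  · have := gcoef_pos_of_two_le h1 h2 (two_lt_of_five_le_mul h1 hK).le
    have : (0 : ℝ) < K := by exact_mod_cast (two_lt_of_five_le_mul h1 hK).trans' two_pos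
    positivity
  · obtain ⟨j, rfl⟩ := Nat.exists_eq_add_of_le hm
    exact hmono (Nat.zero_le j)

lemma not_summable_w_mul_sq {γ : ℝ} (h1 : 1 < γ) (h2 : γ < 2) :
    ¬ Summable fun m : ℕ => w γ (m + 3) * ((m : ℝ) + 2) ^ 2 := by
  intro hs
  obtain ⟨c₀, hc₀, K, hcube⟩ := exists_pos_le_gcoef_mul_cube h1 h2
  have h2γ : 0 < 2 - γ := by linarith
  have hbound (j : ℕ) : (2 - γ) / 2 * c₀ * (1 / ((j + (K + 2) : ℕ) : ℝ)) ≤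
      w γ (j + K + 3) * (((j + K : ℕ) : ℝ) + 2) ^ 2 := by
    have hx : ((j + (K + 2) : ℕ) : ℝ) = ((j + K : ℕ) : ℝ) + 2 := by push_cast; ring
    have hc := hcube (j + (K + 2)) (by omega)
    rw [hx, show j + (K + 2) = j + K + 2 by ring] at hc
    rw [hx, mul_one_div, div_le_iff₀ (by positivity)]
    calc (2 - γ) / 2 * c₀
        ≤ (2 - γ) / 2 * (gcoef γ (j + K + 2) * (((j + K : ℕ) : ℝ) + 2) ^ 3) := by gcongr
      _ ≤ w γ (j + K + 3) * (((j + K : ℕ) : ℝ) + 2) ^ 2 * (((j + K : ℕ) : ℝ) + 2) := by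
          rw [← mul_assoc, pow_succ, ← mul_assoc]
          gcongr
          exact gcoef_le_w_add_three h1 h2 (j + K)
  apply Real.not_summable_one_div_natCast
  rw [← summable_nat_add_iff (K + 2)]
  have htail : Summable fun j : ℕ => w γ (j + K + 3) * (((j + K : ℕ) : ℝ) + 2) ^ 2 :=
    (summable_nat_add_iff K).mpr hs
  have hharm : Summable fun j : ℕ => (2 - γ) / 2 * c₀ * (1 / ((j + (K + 2) : ℕ) : ℝ)) :=
    htail.of_nonneg_of_le (fun j => by positivity) hbound
  exact (summable_mul_left_iff (by positivity)).mp hharm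

lemma sum_mul_sq_le_qsym_re {γ : ℝ} (h1 : 1 < γ) (h2 : γ < 2) {ξ : ℝ} {n : ℕ}
    (hξ : (n + 1) * |ξ| ≤ π) :
    4 / π ^ 2 * (∑ m ∈ Finset.range n, w γ (m + 3) * ((m : ℝ) + 2) ^ 2) * ξ ^ 2 ≤
      (qsym γ ξ).re := by
  refine le_trans ?_ (sum_le_qsym_re h1 h2 ξ n)
  rw [Finset.mul_sum, Finset.sum_mul, Finset.mul_sum]
  refine Finset.sum_le_sum fun m hm => ?_
  have hm' : (m : ℝ) + 2 ≤ n + 1 := by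
    have := Finset.mem_range.mp hm
    exact_mod_cast (by omega : m + 2 ≤ n + 1)
  have hcos := Real.cos_le_one_sub_mul_cos_sq (x := (m + 2) * ξ) (by
    rw [abs_mul, abs_of_pos (by positivity : (0 : ℝ) < m + 2)]
    exact (mul_le_mul_of_nonneg_right hm' (abs_nonneg ξ)).trans hξ)
  have hw := (w_add_three_pos h1 h2 m).le
  have : 2 / π ^ 2 * ((m + 2) * ξ) ^ 2 ≤ 1 - Real.cos ((m + 2) * ξ) := by linarith
  calc 4 / π ^ 2 * (w γ (m + 3) * ((m : ℝ) + 2) ^ 2) * ξ ^ 2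
      = 2 * (w γ (m + 3) * (2 / π ^ 2 * ((m + 2) * ξ) ^ 2)) := by ring
    _ ≤ 2 * (w γ (m + 3) * (1 - Real.cos ((m + 2) * ξ))) := by gcongr

lemma tendsto_qsym_re_div_sq_atTop {γ : ℝ} (h1 : 1 < γ) (h2 : γ < 2) :
    Tendsto (fun ξ => (qsym γ ξ).re / ξ ^ 2) (𝓝[≠] 0) atTop := by
  have hS := (not_summable_iff_tendsto_nat_atTop_of_nonneg fun m =>
    mul_nonneg (w_add_three_pos h1 h2 m).le (sq_nonneg _)).mp (not_summable_w_mul_sq h1 h2)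
  refine tendsto_atTop.mpr fun b => ?_
  obtain ⟨n, hn⟩ := ((hS.const_mul_atTop (by positivity : (0 : ℝ) < 4 / π ^ 2)).eventually_ge_atTop
    b).exists
  have hsmall : ∀ᶠ ξ in 𝓝 (0 : ℝ), (n + 1) * |ξ| ≤ π := by
    have : Tendsto (fun ξ : ℝ => (n + 1) * |ξ|) (𝓝 0) (𝓝 0) := by
      simpa using (continuous_abs.tendsto (0 : ℝ)).const_mul ((n : ℝ) + 1)
    exact this.eventually (ge_mem_nhds Real.pi_pos)
  filter_upwards [self_mem_nhdsWithin, nhdsWithin_le_nhds hsmall] with ξ hξ0 hξ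
  rw [le_div_iff₀ (sq_pos_of_ne_zero hξ0)]
  exact (mul_le_mul_of_nonneg_right hn (sq_nonneg ξ)).trans (sum_mul_sq_le_qsym_re h1 h2 hξ)

lemma tendsto_sq_div_of_tendsto_div_sq_atTop {q : ℝ → ℝ}
    (hq : Tendsto (fun t => q t / t ^ 2) (𝓝[≠] 0) atTop) :
    Tendsto (fun t => t ^ 2 / q t) (𝓝 0) (𝓝 0) := by
  have hne : Tendsto (fun t => t ^ 2 / q t) (𝓝[≠] 0) (𝓝 0) :=
    hq.inv_tendsto_atTop.congr fun t => by simp only [Pi.inv_apply, inv_div]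
  have hzero : Tendsto (fun t => t ^ 2 / q t) (pure 0) (𝓝 0) := by
    have := tendsto_pure_nhds (fun t : ℝ => t ^ 2 / q t) 0
    rwa [zero_pow two_ne_zero, zero_div] at this
  simpa only [nhdsNE_sup_pure] using tendsto_sup.mpr ⟨hne, hzero⟩

lemma tendsto_div_of_abs_le_mul_sq {X : Type*} {l : Filter X} {s f F : X → ℝ} {q : ℝ → ℝ}
    {C c : ℝ} (hc : 0 < c) (hq : Tendsto (fun t => q t / t ^ 2) (𝓝[≠] 0) atTop)
    (hs : Tendsto s l (𝓝 0)) (hf : ∀ x, |f x| ≤ C * s x ^ 2) (hF : ∀ x, c * q (s x) ≤ F x) :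
    Tendsto (fun x => f x / F x) l (𝓝 0) := by
  have hpos : ∀ᶠ t in 𝓝 (0 : ℝ), t = 0 ∨ 0 < q t := by
    have := eventually_nhdsWithin_iff.mp (hq.eventually_gt_atTop 0)
    filter_upwards [this] with t ht
    by_cases h : t = 0
    · exact Or.inl h
    · exact Or.inr (pos_of_mul_pos_left ((ht h).trans_eq (div_eq_mul_inv _ _)) (by positivity))
  refine squeeze_zero_norm' ?_
    (by simpa using ((tendsto_sq_div_of_tendsto_div_sq_atTop hq).comp hs).const_mul (C / c))
  filter_upwards [hs.eventually hpos] with x hx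
  rcases hx with hx | hx
  · have : f x = 0 := abs_nonpos_iff.mp (by simpa [hx] using hf x)
    simp [this, hx]
  · have hFpos : 0 < F x := (mul_pos hc hx).trans_le (hF x)
    have hbound_nonneg : 0 ≤ C / c * (s x ^ 2 / q (s x)) := by
      rw [div_mul_div_comm]
      exact div_nonneg ((abs_nonneg _).trans (hf x)) (by positivity)
    rw [Real.norm_eq_abs, abs_div, abs_of_pos hFpos, div_le_iff₀ hFpos]
    calc |f x| ≤ C * s x ^ 2 := hf x
      _ = C / c * (s x ^ 2 / q (s x)) * (c * q (s x)) := by field_simp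
      _ ≤ C / c * (s x ^ 2 / q (s x)) * F x := mul_le_mul_of_nonneg_left (hF x) hbound_nonneg

lemma tendsto_div_Fsym_of_abs_le_sq_fst {α β d e ρ C : ℝ} (hα : α ∈ Set.Ioo (1 : ℝ) 2)
    (hβ : β ∈ Set.Ioo (1 : ℝ) 2) (hd : 0 < d) (he : 0 ≤ e) (hρ : 0 ≤ ρ) {f : ℝ × ℝ → ℝ}
    (hf : ∀ θ, |f θ| ≤ C * θ.1 ^ 2) :
    Tendsto (fun θ => f θ / Fsym α β d e ρ θ) (𝓝[≠] 0) (𝓝 0) :=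
  tendsto_div_of_abs_le_mul_sq hd (tendsto_qsym_re_div_sq_atTop hα.1 hα.2)
    ((continuous_fst.tendsto' 0 0 rfl).mono_left nhdsWithin_le_nhds) hf fun θ => by
      have := mul_nonneg (mul_nonneg he hρ) (qsym_re_nonneg hβ.1 hβ.2 θ.2)
      unfold Fsym
      linarith

lemma tendsto_div_Fsym_of_abs_le_sq_snd {α β d e ρ C : ℝ} (hα : α ∈ Set.Ioo (1 : ℝ) 2)
    (hβ : β ∈ Set.Ioo (1 : ℝ) 2) (hd : 0 ≤ d) (he : 0 < e) (hρ : 0 < ρ) {f : ℝ × ℝ → ℝ}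
    (hf : ∀ θ, |f θ| ≤ C * θ.2 ^ 2) :
    Tendsto (fun θ => f θ / Fsym α β d e ρ θ) (𝓝[≠] 0) (𝓝 0) :=
  tendsto_div_of_abs_le_mul_sq (mul_pos he hρ) (tendsto_qsym_re_div_sq_atTop hβ.1 hβ.2)
    ((continuous_snd.tendsto' 0 0 rfl).mono_left nhdsWithin_le_nhds) hf fun θ => by
      have := mul_nonneg hd (qsym_re_nonneg hα.1 hα.2 θ.1)
      unfold Fsym
      linarith

lemma abs_mul_one_sub_cos_le {t : ℝ} (ht : |t| ≤ 2) (b : ℝ) : |t * (1 - Real.cos b)| ≤ b ^ 2 := by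
  have h0 : 0 ≤ 1 - Real.cos b := by linarith [Real.cos_le_one b]
  have h1 : 1 - Real.cos b ≤ b ^ 2 / 2 := by linarith [Real.one_sub_sq_div_two_le_cos (x := b)]
  rw [abs_mul, abs_of_nonneg h0]
  nlinarith [abs_nonneg t]

lemma abs_sq_mul_one_sub_cos_le {t : ℝ} (ht : |t| ≤ 2) (b : ℝ) :
    |(t * (1 - Real.cos b)) ^ 2| ≤ 4 * b ^ 2 := by
  have h0 : 0 ≤ 1 - Real.cos b := by linarith [Real.cos_le_one b]
  have h2 : 1 - Real.cos b ≤ 2 := by linarith [Real.neg_one_le_cos b]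
  have h1 : 1 - Real.cos b ≤ b ^ 2 / 2 := by linarith [Real.one_sub_sq_div_two_le_cos (x := b)]
  have ht2 : t ^ 2 ≤ 4 := by nlinarith [sq_abs t, abs_nonneg t]
  rw [abs_of_nonneg (sq_nonneg _), mul_pow]
  calc t ^ 2 * (1 - Real.cos b) ^ 2 ≤ 4 * (2 * (b ^ 2 / 2)) := by
        gcongr
        rw [sq]
        exact mul_le_mul h2 h1 h0 zero_le_two
    _ = 4 * b ^ 2 := by ring

/-- The bilinear-interpolation symbol satisfies the mirror-point conditions with
constant `0`: for each of the three mirror-point maps `y(θ)`, both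
`p(y(θ))/𝓕_{(α,β)}(θ) → 0` and `p(y(θ))²/𝓕_{(α,β)}(θ) → 0` as `θ → (0,0)`,
i.e. both the two-grid condition and the stronger V-cycle condition hold with `c = 0`. -/
theorem bilinear_symbol_mirror_conditions (α β d e ρ : ℝ)
    (hα : α ∈ Set.Ioo (1 : ℝ) 2) (hβ : β ∈ Set.Ioo (1 : ℝ) 2)
    (hd : 0 < d) (he : 0 < e) (hρ : 0 < ρ) :
    Tendsto (fun θ : ℝ × ℝ => pfun (θ.1, Real.pi - θ.2) / Fsym α β d e ρ θ)
      (𝓝[≠] (0 : ℝ × ℝ)) (𝓝 0) ∧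
    Tendsto (fun θ : ℝ × ℝ => pfun (Real.pi - θ.1, θ.2) / Fsym α β d e ρ θ)
      (𝓝[≠] (0 : ℝ × ℝ)) (𝓝 0) ∧
    Tendsto (fun θ : ℝ × ℝ => pfun (Real.pi - θ.1, Real.pi - θ.2) / Fsym α β d e ρ θ)
      (𝓝[≠] (0 : ℝ × ℝ)) (𝓝 0) ∧
    Tendsto (fun θ : ℝ × ℝ => pfun (θ.1, Real.pi - θ.2) ^ 2 / Fsym α β d e ρ θ)
      (𝓝[≠] (0 : ℝ × ℝ)) (𝓝 0) ∧
    Tendsto (fun θ : ℝ × ℝ => pfun (Real.pi - θ.1, θ.2) ^ 2 / Fsym α β d e ρ θ)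
      (𝓝[≠] (0 : ℝ × ℝ)) (𝓝 0) ∧
    Tendsto (fun θ : ℝ × ℝ => pfun (Real.pi - θ.1, Real.pi - θ.2) ^ 2 / Fsym α β d e ρ θ)
      (𝓝[≠] (0 : ℝ × ℝ)) (𝓝 0) := by
  have hplus (a : ℝ) : |1 + Real.cos a| ≤ 2 :=
    abs_le.mpr ⟨by linarith [Real.neg_one_le_cos a], by linarith [Real.cos_le_one a]⟩
  have hminus (a : ℝ) : |1 - Real.cos a| ≤ 2 :=
    abs_le.mpr ⟨by linarith [Real.cos_le_one a], by linarith [Real.neg_one_le_cos a]⟩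
  have p₁ (θ : ℝ × ℝ) : pfun (θ.1, π - θ.2) = (1 + Real.cos θ.1) * (1 - Real.cos θ.2) := by
    simp only [pfun, Real.cos_pi_sub]; ring
  have p₂ (θ : ℝ × ℝ) : pfun (π - θ.1, θ.2) = (1 + Real.cos θ.2) * (1 - Real.cos θ.1) := by
    simp only [pfun, Real.cos_pi_sub]; ring
  have p₃ (θ : ℝ × ℝ) : pfun (π - θ.1, π - θ.2) = (1 - Real.cos θ.1) * (1 - Real.cos θ.2) := by
    simp only [pfun, Real.cos_pi_sub]; ring
  refine ⟨?_, ?_, ?_, ?_, ?_, ?_⟩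
  · exact tendsto_div_Fsym_of_abs_le_sq_snd hα hβ hd.le he hρ (C := 1) fun θ => by
      rw [p₁, one_mul]; exact abs_mul_one_sub_cos_le (hplus θ.1) θ.2
  · exact tendsto_div_Fsym_of_abs_le_sq_fst hα hβ hd he.le hρ.le (C := 1) fun θ => by
      rw [p₂, one_mul]; exact abs_mul_one_sub_cos_le (hplus θ.2) θ.1
  · exact tendsto_div_Fsym_of_abs_le_sq_snd hα hβ hd.le he hρ (C := 1) fun θ => by
      rw [p₃, one_mul]; exact abs_mul_one_sub_cos_le (hminus θ.1) θ.2
  · exact tendsto_div_Fsym_of_abs_le_sq_snd hα hβ hd.le he hρ fun θ => by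
      rw [p₁]; exact abs_sq_mul_one_sub_cos_le (hplus θ.1) θ.2
  · exact tendsto_div_Fsym_of_abs_le_sq_fst hα hβ hd he.le hρ.le fun θ => by
      rw [p₂]; exact abs_sq_mul_one_sub_cos_le (hplus θ.2) θ.1
  · exact tendsto_div_Fsym_of_abs_le_sq_snd hα hβ hd.le he hρ fun θ => by
      rw [p₃]; exact abs_sq_mul_one_sub_cos_le (hminus θ.1) θ.2
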